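/- arXiv:1903.01065 — 3 statements merged into one kernel-verified Lean document; each statement's English description precedes it below -/
import Mathlib

section
/- Let D be the dual function of the voltage control problem with linearized power flow v(p,q) = Rp + Xq + v₀𝟏. Then ∇D is Lipschitz continuous with constant L = 2(‖R‖² + ‖X‖²)/a_min, where ‖·‖ is the spectral norm and a_min is the smallest of the quadratic cost coefficients. -/
/-!
Both projections `p(λ)` and `q(λ)` are clamps of affine maps of `λ̲ - λ̄`, and clamping is
1-Lipschitz coordinatewise, so `‖Δp‖ ≤ ‖R‖ ‖Δλ̲ - Δλ̄‖ / a_min` and likewise for `q`. The two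
halves of `∇D` change by `∓(R Δp + X Δq)`, giving
`‖Δ∇D‖ = √2 ‖R Δp + X Δq‖ ≤ √2 (‖R‖² + ‖X‖²)/a_min · ‖Δλ̲ - Δλ̄‖`, and finally
`‖Δλ̲ - Δλ̄‖ ≤ √2 ‖Δ𝛌‖` contributes the second factor `√2`.
-/

open Real

lemma abs_clamp_sub_clamp_le (lo hi x y : ℝ) :
    |max lo (min x hi) - max lo (min y hi)| ≤ |x - y| := by
  calc |max lo (min x hi) - max lo (min y hi)|
      ≤ max |lo - lo| |min x hi - min y hi| := abs_max_sub_max_le_max _ _ _ _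
    _ ≤ |x - y| := by
      simpa [abs_nonneg] using abs_min_sub_min_le_max x hi y hi

lemma abs_clamp_div_sub_clamp_div_le {lo hi s t a b amin : ℝ} (hamin : 0 < amin)
    (ha : amin ≤ a) :
    |max lo (min (s / a - b) hi) - max lo (min (t / a - b) hi)| ≤ |s - t| / amin := by
  have ha' : 0 < a := hamin.trans_le ha
  calc |max lo (min (s / a - b) hi) - max lo (min (t / a - b) hi)|
      ≤ |(s / a - b) - (t / a - b)| := abs_clamp_sub_clamp_le _ _ _ _
    _ = |s - t| / a := by rw [← abs_of_pos ha', ← abs_div, abs_of_pos ha']; ring_nf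
    _ ≤ |s - t| / amin := div_le_div_of_nonneg_left (abs_nonneg _) hamin ha

lemma EuclideanSpace.norm_le_norm_of_abs_le {ι : Type*} [Fintype ι]
    {x y : EuclideanSpace ℝ ι} (h : ∀ i, |x i| ≤ |y i|) : ‖x‖ ≤ ‖y‖ := by
  rw [EuclideanSpace.norm_eq, EuclideanSpace.norm_eq]
  gcongr with i
  exact h i

lemma norm_sub_le_of_clamp {ι E : Type*} [Fintype ι] [SeminormedAddCommGroup E]
    [NormedSpace ℝ E] (A : E →L[ℝ] EuclideanSpace ℝ ι) {a b lo hi : ι → ℝ} {amin : ℝ}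
    (hamin : 0 < amin) (ha : ∀ i, amin ≤ a i) {u v : EuclideanSpace ℝ ι} {y z : E}
    (hu : ∀ i, u i = max (lo i) (min (A y i / a i - b i) (hi i)))
    (hv : ∀ i, v i = max (lo i) (min (A z i / a i - b i) (hi i))) :
    ‖u - v‖ ≤ ‖A‖ / amin * ‖y - z‖ := by
  have hcoord : ∀ i, |(u - v) i| ≤ |(amin⁻¹ • A (y - z)) i| := by
    intro i
    rw [PiLp.sub_apply, hu, hv, PiLp.smul_apply, map_sub, PiLp.sub_apply, smul_eq_mul,
      abs_mul, abs_of_pos (inv_pos.mpr hamin), inv_mul_eq_div]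
    exact abs_clamp_div_sub_clamp_div_le hamin (ha i)
  calc ‖u - v‖ ≤ ‖amin⁻¹ • A (y - z)‖ := EuclideanSpace.norm_le_norm_of_abs_le hcoord
    _ = ‖A (y - z)‖ / amin := by
      rw [norm_smul, norm_inv, Real.norm_of_nonneg hamin.le, inv_mul_eq_div]
    _ ≤ ‖A‖ * ‖y - z‖ / amin := by gcongr; exact A.le_opNorm _
    _ = ‖A‖ / amin * ‖y - z‖ := by ring

lemma norm_sub_le_sqrt_two_mul_sqrt {E : Type*} [SeminormedAddCommGroup E] (x y : E) :
    ‖x - y‖ ≤ √2 * √(‖x‖ ^ 2 + ‖y‖ ^ 2) := by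
  calc ‖x - y‖ ≤ ‖x‖ + ‖y‖ := norm_sub_le x y
    _ = √((‖x‖ + ‖y‖) ^ 2) := (sqrt_sq (by positivity)).symm
    _ ≤ √(2 * (‖x‖ ^ 2 + ‖y‖ ^ 2)) := sqrt_le_sqrt add_sq_le
    _ = √2 * √(‖x‖ ^ 2 + ‖y‖ ^ 2) := sqrt_mul zero_le_two _

theorem stmt_3_general (N : ℕ)
    (R X : EuclideanSpace ℝ (Fin N) →L[ℝ] EuclideanSpace ℝ (Fin N))
    (aP aQ bP bQ pl pu ql qu vl vu : Fin N → ℝ) (v0 amin : ℝ)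
    (hamin : 0 < amin) (haP : ∀ i, amin ≤ aP i) (haQ : ∀ i, amin ≤ aQ i)
    (p q : EuclideanSpace ℝ (Fin N) → EuclideanSpace ℝ (Fin N) → EuclideanSpace ℝ (Fin N))
    (hp : ∀ ll lb i, p ll lb i = max (pl i) (min ((R (ll - lb)) i / aP i - bP i) (pu i)))
    (hq : ∀ ll lb i, q ll lb i = max (ql i) (min ((X (ll - lb)) i / aQ i - bQ i) (qu i)))
    (v : EuclideanSpace ℝ (Fin N) → EuclideanSpace ℝ (Fin N) → EuclideanSpace ℝ (Fin N))
    (hv : ∀ pp qq i, v pp qq i = (R pp) i + (X qq) i + v0)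
    (gD1 gD2 : EuclideanSpace ℝ (Fin N) → EuclideanSpace ℝ (Fin N) → EuclideanSpace ℝ (Fin N))
    (hg1 : ∀ ll lb i, gD1 ll lb i = vl i - v (p ll lb) (q ll lb) i)
    (hg2 : ∀ ll lb i, gD2 ll lb i = v (p ll lb) (q ll lb) i - vu i) :
    ∀ ll₁ lb₁ ll₂ lb₂ : EuclideanSpace ℝ (Fin N),
      (∀ i, 0 ≤ ll₁ i) → (∀ i, 0 ≤ lb₁ i) → (∀ i, 0 ≤ ll₂ i) → (∀ i, 0 ≤ lb₂ i) →
      Real.sqrt (‖gD1 ll₁ lb₁ - gD1 ll₂ lb₂‖ ^ 2 + ‖gD2 ll₁ lb₁ - gD2 ll₂ lb₂‖ ^ 2) ≤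
        (2 * (‖R‖ ^ 2 + ‖X‖ ^ 2) / amin) *
          Real.sqrt (‖ll₁ - ll₂‖ ^ 2 + ‖lb₁ - lb₂‖ ^ 2) := by
  intro ll₁ lb₁ ll₂ lb₂ _ _ _ _
  set Δ := (ll₁ - lb₁) - (ll₂ - lb₂)
  set w := R (p ll₁ lb₁ - p ll₂ lb₂) + X (q ll₁ lb₁ - q ll₂ lb₂)
  have hΔp := norm_sub_le_of_clamp R hamin haP (hp ll₁ lb₁) (hp ll₂ lb₂)
  have hΔq := norm_sub_le_of_clamp X hamin haQ (hq ll₁ lb₁) (hq ll₂ lb₂)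
  have hΔg1 : gD1 ll₁ lb₁ - gD1 ll₂ lb₂ = -w := by
    ext i; simp only [PiLp.sub_apply, PiLp.neg_apply, PiLp.add_apply, w, map_sub, hg1, hv]; ring
  have hΔg2 : gD2 ll₁ lb₁ - gD2 ll₂ lb₂ = w := by
    ext i; simp only [PiLp.sub_apply, PiLp.add_apply, w, map_sub, hg2, hv]; ring
  have hw : ‖w‖ ≤ (‖R‖ ^ 2 + ‖X‖ ^ 2) / amin * ‖Δ‖ :=
    calc ‖w‖ ≤ ‖R‖ * ‖p ll₁ lb₁ - p ll₂ lb₂‖ + ‖X‖ * ‖q ll₁ lb₁ - q ll₂ lb₂‖ :=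
          (norm_add_le _ _).trans (add_le_add (R.le_opNorm _) (X.le_opNorm _))
      _ ≤ ‖R‖ * (‖R‖ / amin * ‖Δ‖) + ‖X‖ * (‖X‖ / amin * ‖Δ‖) := by gcongr
      _ = (‖R‖ ^ 2 + ‖X‖ ^ 2) / amin * ‖Δ‖ := by ring
  set S := √(‖ll₁ - ll₂‖ ^ 2 + ‖lb₁ - lb₂‖ ^ 2)
  have hΔ : ‖Δ‖ ≤ √2 * S := by
    simpa only [Δ, sub_sub_sub_comm] using norm_sub_le_sqrt_two_mul_sqrt (ll₁ - ll₂) (lb₁ - lb₂)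
  rw [hΔg1, hΔg2, norm_neg, ← two_mul, sqrt_mul zero_le_two, sqrt_sq (norm_nonneg w)]
  calc √2 * ‖w‖ ≤ √2 * ((‖R‖ ^ 2 + ‖X‖ ^ 2) / amin * (√2 * S)) := by
        gcongr; exact hw.trans (by gcongr)
    _ = (2 * (‖R‖ ^ 2 + ‖X‖ ^ 2) / amin) * S := by
        linear_combination (‖R‖ ^ 2 + ‖X‖ ^ 2) / amin * S * mul_self_sqrt (zero_le_two (α := ℝ))

/-- The dual gradient of the voltage control problem with linearized power flow
is Lipschitz continuous with constant `L = 2(‖R‖² + ‖X‖²)/a_min`. -/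
theorem stmt_3 (N : ℕ)
    (R X : EuclideanSpace ℝ (Fin N) →L[ℝ] EuclideanSpace ℝ (Fin N))
    (aP aQ bP bQ pl pu ql qu vl vu : Fin N → ℝ) (v0 amin : ℝ)
    (hamin : 0 < amin) (haP : ∀ i, amin ≤ aP i) (haQ : ∀ i, amin ≤ aQ i)
    (hbox_p : ∀ i, pl i ≤ pu i) (hbox_q : ∀ i, ql i ≤ qu i)
    (p q : EuclideanSpace ℝ (Fin N) → EuclideanSpace ℝ (Fin N) → EuclideanSpace ℝ (Fin N))
    (hp : ∀ ll lb i, p ll lb i = max (pl i) (min ((R (ll - lb)) i / aP i - bP i) (pu i)))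
    (hq : ∀ ll lb i, q ll lb i = max (ql i) (min ((X (ll - lb)) i / aQ i - bQ i) (qu i)))
    (v : EuclideanSpace ℝ (Fin N) → EuclideanSpace ℝ (Fin N) → EuclideanSpace ℝ (Fin N))
    (hv : ∀ pp qq i, v pp qq i = (R pp) i + (X qq) i + v0)
    (gD1 gD2 : EuclideanSpace ℝ (Fin N) → EuclideanSpace ℝ (Fin N) → EuclideanSpace ℝ (Fin N))
    (hg1 : ∀ ll lb i, gD1 ll lb i = vl i - v (p ll lb) (q ll lb) i)
    (hg2 : ∀ ll lb i, gD2 ll lb i = v (p ll lb) (q ll lb) i - vu i) :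
    ∀ ll₁ lb₁ ll₂ lb₂ : EuclideanSpace ℝ (Fin N),
      (∀ i, 0 ≤ ll₁ i) → (∀ i, 0 ≤ lb₁ i) → (∀ i, 0 ≤ ll₂ i) → (∀ i, 0 ≤ lb₂ i) →
      Real.sqrt (‖gD1 ll₁ lb₁ - gD1 ll₂ lb₂‖ ^ 2 + ‖gD2 ll₁ lb₁ - gD2 ll₂ lb₂‖ ^ 2) ≤
        (2 * (‖R‖ ^ 2 + ‖X‖ ^ 2) / amin) *
          Real.sqrt (‖ll₁ - ll₂‖ ^ 2 + ‖lb₁ - lb₂‖ ^ 2) :=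
  stmt_3_general N R X aP aQ bP bQ pl pu ql qu vl vu v0 amin hamin haP haQ p q hp hq v hv gD1 gD2
    hg1 hg2
end

section
/- Let D : ℝᵐ → ℝ be concave with L-Lipschitz gradient, and let 𝛌(t+1) = ⌈𝛌(t) + γ g(t)⌉₊ for an approximate gradient g(t). Then D(𝛌(t+1)) ≥ D(𝛌(t)) + (1/γ − L/2)‖Δ(t)‖² − ‖∇D(𝛌(t)) − g(t)‖·‖Δ(t)‖, where Δ(t) = 𝛌(t+1) − 𝛌(t). -/
/-!
Along the segment from `x` to `y`, the Lipschitz bound on the gradient makes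
`t ↦ D (x + t • (y - x)) - t ⟪∇D x, y - x⟫ + (L / 2) t² ‖y - x‖²` monotone on `[0, 1]`; comparing its
values at `0` and `1` is the descent lemma `D y ≥ D x + ⟪∇D x, y - x⟫ - (L / 2) ‖y - x‖²`.
Coordinatewise, the projected step `Δ` satisfies `Δᵢ² ≤ γ gᵢ Δᵢ`, so `‖Δ‖² / γ ≤ ⟪g, Δ⟫`.
Writing `⟪∇D λ, Δ⟫ = ⟪g, Δ⟫ + ⟪∇D λ - g, Δ⟫` and bounding the last term by Cauchy–Schwarz gives
the estimate.
-/

open scoped RealInnerProductSpace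

section LipschitzGradient

variable {E : Type*} [NormedAddCommGroup E] [InnerProductSpace ℝ E] [CompleteSpace E]
  {f : E → ℝ} {f' : E → E}

theorem HasGradientAt.hasDerivAt_comp_add_smul {g x v : E} {t : ℝ}
    (h : HasGradientAt f g (x + t • v)) :
    HasDerivAt (fun s : ℝ => f (x + s • v)) ⟪g, v⟫ t := by
  have hline : HasDerivAt (fun s : ℝ => x + s • v) v t := by
    simpa using ((hasDerivAt_id t).smul_const v).const_add x
  have := h.hasFDerivAt.comp_hasDerivAt t hline
  simp only [InnerProductSpace.toDual_apply_apply] at this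
  exact this

theorem add_inner_sub_sub_le_of_lipschitz_gradient
    (hgrad : ∀ x, HasGradientAt f (f' x) x) {L : ℝ}
    (hLip : ∀ x y, ‖f' x - f' y‖ ≤ L * ‖x - y‖) (x y : E) :
    f x + ⟪f' x, y - x⟫ - L / 2 * ‖y - x‖ ^ 2 ≤ f y := by
  set v := y - x
  let φ : ℝ → ℝ := fun t => f (x + t • v) - t * ⟪f' x, v⟫ + L / 2 * ‖v‖ ^ 2 * t ^ 2
  have hφ : ∀ t, HasDerivAt φ (⟪f' (x + t • v) - f' x, v⟫ + L * ‖v‖ ^ 2 * t) t := by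
    intro t
    have := (((hgrad (x + t • v)).hasDerivAt_comp_add_smul).sub
      ((hasDerivAt_id t).mul_const ⟪f' x, v⟫)).add
      ((hasDerivAt_pow 2 t).const_mul (L / 2 * ‖v‖ ^ 2))
    refine this.congr_deriv ?_
    rw [inner_sub_left]
    ring
  have hmono : MonotoneOn φ (Set.Icc 0 1) := by
    refine monotoneOn_of_hasDerivWithinAt_nonneg (convex_Icc 0 1)
      (fun t _ => (hφ t).continuousAt.continuousWithinAt)
      (fun t _ => (hφ t).hasDerivWithinAt) ?_
    intro t ht
    rw [interior_Icc] at ht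
    have hseg : ‖x + t • v - x‖ = t * ‖v‖ := by
      rw [add_sub_cancel_left, norm_smul, Real.norm_of_nonneg ht.1.le]
    have hcs : -⟪f' (x + t • v) - f' x, v⟫ ≤ L * ‖v‖ ^ 2 * t :=
      calc -⟪f' (x + t • v) - f' x, v⟫ ≤ ‖f' (x + t • v) - f' x‖ * ‖v‖ :=
            (neg_le_abs _).trans (abs_real_inner_le_norm _ _)
        _ ≤ L * ‖x + t • v - x‖ * ‖v‖ := by gcongr; exact hLip _ _
        _ = L * ‖v‖ ^ 2 * t := by rw [hseg]; ring
    linarith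
  have h01 := hmono ⟨le_rfl, zero_le_one⟩ ⟨zero_le_one, le_rfl⟩ zero_le_one
  simp only [φ, v, zero_smul, add_zero, one_smul, add_sub_cancel] at h01
  linarith

end LipschitzGradient

theorem sq_max_zero_add_sub_le_mul {a c : ℝ} (ha : 0 ≤ a) :
    (max 0 (a + c) - a) ^ 2 ≤ c * (max 0 (a + c) - a) := by
  rcases le_total 0 (a + c) with h | h
  · rw [max_eq_right h]; nlinarith
  · rw [max_eq_left h]; nlinarith

theorem sq_norm_projected_step_le {ι : Type*} [Fintype ι] (γ : ℝ)
    (lam lamnext g : EuclideanSpace ℝ ι)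
    (hlam : ∀ i, 0 ≤ lam i) (hnext : ∀ i, lamnext i = max 0 (lam i + γ * g i)) :
    ‖lamnext - lam‖ ^ 2 ≤ γ * ⟪g, lamnext - lam⟫ := by
  rw [← real_inner_self_eq_norm_sq]
  simp only [PiLp.inner_apply, PiLp.sub_apply, RCLike.inner_apply, conj_trivial, Finset.mul_sum]
  refine Finset.sum_le_sum fun i _ => ?_
  rw [hnext i]
  nlinarith [sq_max_zero_add_sub_le_mul (c := γ * g i) (hlam i)]

theorem stmt_9_general (m : ℕ) (D : EuclideanSpace ℝ (Fin m) → ℝ)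
    (gradD : EuclideanSpace ℝ (Fin m) → EuclideanSpace ℝ (Fin m))
    (hgrad : ∀ x, HasGradientAt D (gradD x) x)
    (L : ℝ)
    (hLip : ∀ x y, ‖gradD x - gradD y‖ ≤ L * ‖x - y‖)
    (γ : ℝ) (hγ : 0 < γ)
    (lam lamnext g : EuclideanSpace ℝ (Fin m))
    (hlam : ∀ i, 0 ≤ lam i)
    (hnext : ∀ i, lamnext i = max 0 (lam i + γ * g i)) :
    D lam + (1 / γ - L / 2) * ‖lamnext - lam‖ ^ 2
        - ‖gradD lam - g‖ * ‖lamnext - lam‖ ≤ D lamnext := by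
  set Δ := lamnext - lam
  have hdesc := add_inner_sub_sub_le_of_lipschitz_gradient hgrad hLip lam lamnext
  have hstep : 1 / γ * ‖Δ‖ ^ 2 ≤ ⟪g, Δ⟫ := by
    rw [one_div_mul_eq_div, div_le_iff₀' hγ]
    exact sq_norm_projected_step_le γ lam lamnext g hlam hnext
  have hcs : -(‖gradD lam - g‖ * ‖Δ‖) ≤ ⟪gradD lam - g, Δ⟫ :=
    neg_le_of_abs_le (abs_real_inner_le_norm _ _)
  rw [inner_sub_left] at hcs
  linarith

/-- Ascent estimate for one projected approximate-gradient step on a concave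
function with `L`-Lipschitz gradient. -/
theorem stmt_9 (m : ℕ) (D : EuclideanSpace ℝ (Fin m) → ℝ)
    (gradD : EuclideanSpace ℝ (Fin m) → EuclideanSpace ℝ (Fin m))
    (hconc : ConcaveOn ℝ Set.univ D)
    (hgrad : ∀ x, HasGradientAt D (gradD x) x)
    (L : ℝ) (hL : 0 < L)
    (hLip : ∀ x y, ‖gradD x - gradD y‖ ≤ L * ‖x - y‖)
    (γ : ℝ) (hγ : 0 < γ)
    (lam lamnext g : EuclideanSpace ℝ (Fin m))
    (hlam : ∀ i, 0 ≤ lam i)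
    (hnext : ∀ i, lamnext i = max 0 (lam i + γ * g i)) :
    D lam + (1 / γ - L / 2) * ‖lamnext - lam‖ ^ 2
        - ‖gradD lam - g‖ * ‖lamnext - lam‖ ≤ D lamnext :=
  stmt_9_general m D gradD hgrad L hLip γ hγ lam lamnext g hlam hnext
end

section
/- Suppose D : ℝᵐ → ℝ is continuous, the sequence 𝛌(t) is bounded with 𝛌(t+1) − 𝛌(t) → 0, g(t) → ∇D(𝛌*) whenever 𝛌(tᵢ) → 𝛌* along a subsequence, and 𝛌(t+1) = ⌈𝛌(t) + γ g(t)⌉₊ with γ > 0. Then every limit point 𝛌* of 𝛌(t) is a fixed point of the projected gradient map: ⌈𝛌* + γ∇D(𝛌*)⌉₊ = 𝛌*. -/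
open Filter Topology

theorem eq_of_tendsto_subseq_of_recurrence {X Y : Type*} [MetricSpace X] [TopologicalSpace Y]
    {F : X → Y → X} (hF : Continuous (Function.uncurry F)) {x : ℕ → X} {y : ℕ → Y}
    (hrec : ∀ t, x (t + 1) = F (x t) (y t))
    (hstep : Tendsto (fun t => dist (x (t + 1)) (x t)) atTop (𝓝 0))
    {φ : ℕ → ℕ} (hφ : Tendsto φ atTop atTop) {a : X} {b : Y}
    (hx : Tendsto (x ∘ φ) atTop (𝓝 a)) (hy : Tendsto (y ∘ φ) atTop (𝓝 b)) :
    F a b = a := by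
  have hnext : Tendsto (fun k => x (φ k + 1)) atTop (𝓝 a) :=
    hx.congr_dist <| by
      simpa only [dist_comm, Function.comp_def] using hstep.comp hφ
  have hF_lim : Tendsto (fun k => F (x (φ k)) (y (φ k))) atTop (𝓝 (F a b)) :=
    (hF.tendsto (a, b)).comp (hx.prodMk_nhds hy)
  simp only [← hrec] at hF_lim
  exact tendsto_nhds_unique hF_lim hnext

theorem stmt_12_general (m : ℕ)
    (gradD : EuclideanSpace ℝ (Fin m) → EuclideanSpace ℝ (Fin m))
    (hgradcont : Continuous gradD)
    (γ : ℝ)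
    (lam : ℕ → EuclideanSpace ℝ (Fin m)) (g : ℕ → EuclideanSpace ℝ (Fin m))
    (hupd : ∀ t i, lam (t + 1) i = max 0 (lam t i + γ * g t i))
    (hgap : Filter.Tendsto (fun t => ‖gradD (lam t) - g t‖) Filter.atTop (nhds 0))
    (hstep : Filter.Tendsto (fun t => ‖lam (t + 1) - lam t‖) Filter.atTop (nhds 0)) :
    ∀ lamstar : EuclideanSpace ℝ (Fin m), ∀ φ : ℕ → ℕ, StrictMono φ →
      Filter.Tendsto (fun k => lam (φ k)) Filter.atTop (nhds lamstar) →
      ∀ i, max 0 (lamstar i + γ * gradD lamstar i) = lamstar i := by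
  intro lamstar φ hφ hlim i
  have hg : Tendsto (g ∘ φ) atTop (𝓝 (gradD lamstar)) :=
    ((hgradcont.tendsto lamstar).comp hlim).congr_dist <| by
      simpa only [dist_eq_norm, Function.comp_def] using hgap.comp hφ.tendsto_atTop
  have hcoord : Continuous fun v : EuclideanSpace ℝ (Fin m) => v i :=
    PiLp.continuous_apply 2 _ i
  refine eq_of_tendsto_subseq_of_recurrence (F := fun u v => max 0 (u + γ * v))
    (x := fun t => lam t i) (y := fun t => g t i) (by fun_prop) (fun t => hupd t i) ?_
    hφ.tendsto_atTop ((hcoord.tendsto lamstar).comp hlim) ((hcoord.tendsto _).comp hg)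
  refine squeeze_zero (fun _ => dist_nonneg) (fun t => ?_) hstep
  exact (PiLp.dist_apply_le _ _ i).trans_eq (dist_eq_norm _ _)

/-- Every limit point of the projected approximate-gradient iteration is a
fixed point of the projected gradient map. -/
theorem stmt_12 (m : ℕ) (D : EuclideanSpace ℝ (Fin m) → ℝ)
    (gradD : EuclideanSpace ℝ (Fin m) → EuclideanSpace ℝ (Fin m))
    (hD : Continuous D)
    (hgrad : ∀ x, HasGradientAt D (gradD x) x)
    (hgradcont : Continuous gradD)
    (γ : ℝ) (hγ : 0 < γ)
    (lam : ℕ → EuclideanSpace ℝ (Fin m)) (g : ℕ → EuclideanSpace ℝ (Fin m))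
    (hnonneg : ∀ t i, 0 ≤ lam t i)
    (hbdd : ∃ M : ℝ, ∀ t, ‖lam t‖ ≤ M)
    (hupd : ∀ t i, lam (t + 1) i = max 0 (lam t i + γ * g t i))
    (hgap : Filter.Tendsto (fun t => ‖gradD (lam t) - g t‖) Filter.atTop (nhds 0))
    (hstep : Filter.Tendsto (fun t => ‖lam (t + 1) - lam t‖) Filter.atTop (nhds 0)) :
    ∀ lamstar : EuclideanSpace ℝ (Fin m), ∀ φ : ℕ → ℕ, StrictMono φ →
      Filter.Tendsto (fun k => lam (φ k)) Filter.atTop (nhds lamstar) →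
      ∀ i, max 0 (lamstar i + γ * gradD lamstar i) = lamstar i :=
  stmt_12_general m gradD hgradcont γ lam g hupd hgap hstep
end
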